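/- arXiv:1103.6047 — 2 statements merged into one kernel-verified Lean document; each statement's English description precedes it below -/
import Mathlib

section
/- Let φ be the automorphism of F₄ = ⟨a,b,c,d⟩ with φ(a)=a, φ(b)=ba, φ(c)=ca², φ(d)=dc. Then for every p ≥ 1, φ^{-p}(b d⁻¹) = b a^{-p} · (c a^{-2p})·(c a^{-2(p-1)})·⋯·(c a^{-2})· d⁻¹, i.e. φ^{-p}(bd⁻¹) = b a^{-p} · (∏_{j=0}^{p-1} c a^{-2(p-j)}) · d⁻¹ as elements of F₄. -/
namespace Stmt5

abbrev F4 := FreeGroup (Fin 4)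

def a : F4 := FreeGroup.of 0
def b : F4 := FreeGroup.of 1
def c : F4 := FreeGroup.of 2
def d : F4 := FreeGroup.of 3

/-- For any automorphism Φ of F₄ with Φ(a)=a, Φ(b)=ba, Φ(c)=ca², Φ(d)=dc
    (i.e. Φ = φ), and any p ≥ 1:
    φ^{-p}(bd⁻¹) = b a^{-p} · (∏_{j=0}^{p-1} c a^{-2(p-j)}) · d⁻¹
    (product left to right, increasing j). -/
theorem stmt_5 (Φ : MulAut F4)
    (ha : Φ a = a) (hb : Φ b = b * a) (hc : Φ c = c * a ^ 2) (hd : Φ d = d * c)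
    (p : ℕ) (hp : 1 ≤ p) :
    (Φ⁻¹ ^ p) (b * d⁻¹) =
      b * a ^ (-(p : ℤ)) *
        ((List.range p).map (fun j => c * a ^ (-(2 * ((p : ℤ) - (j : ℤ)))))).prod * d⁻¹ := by
  have ψa : Φ⁻¹ a = a := by
    rw [MulAut.inv_def, MulEquiv.symm_apply_eq, ha]
  have ψb : Φ⁻¹ b = b * a⁻¹ := by
    rw [MulAut.inv_def, MulEquiv.symm_apply_eq, map_mul, map_inv, ha, hb]; group
  have ψc : Φ⁻¹ c = c * (a ^ 2)⁻¹ := by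
    rw [MulAut.inv_def, MulEquiv.symm_apply_eq, map_mul, map_inv, map_pow, ha, hc]; group
  have ψd : Φ⁻¹ d = d * a ^ 2 * c⁻¹ := by
    rw [MulAut.inv_def, MulEquiv.symm_apply_eq, map_mul, map_mul, map_inv, map_pow, ha, hc, hd]
    group
  have L : ∀ q : ℕ, 1 ≤ q → (Φ⁻¹ ^ q) (b * d⁻¹) =
      b * a ^ (-(q : ℤ)) *
        ((List.range q).map (fun j : ℕ => c * a ^ (-(2 * ((q : ℤ) - (j : ℕ)))))).prod * d⁻¹ := by
    intro q hq
    induction q, hq using Nat.le_induction with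
    | base =>
      have h1 : List.range 1 = [0] := rfl
      simp only [pow_one, map_mul, map_inv, ψb, ψd, h1, List.map_cons,
        List.map_nil, List.prod_cons, List.prod_nil]
      norm_num
      group
    | succ q hq ih =>
      have step : (Φ⁻¹ ^ (q + 1)) (b * d⁻¹) = Φ⁻¹ ((Φ⁻¹ ^ q) (b * d⁻¹)) := by
        rw [pow_succ']; rfl
      rw [step, ih]
      simp only [map_mul, map_inv, map_zpow, map_list_prod, List.map_map,
        Function.comp_def, ψa, ψb, ψc, ψd]
      have hterm : ∀ j ∈ List.range q,
          c * (a ^ 2)⁻¹ * a ^ (-(2 * ((q : ℤ) - (j : ℕ))))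
            = c * a ^ (-(2 * ((q : ℤ) + 1 - (j : ℕ)))) := by
        intro j _
        rw [mul_assoc, ← zpow_natCast a 2, ← zpow_neg, ← zpow_add]
        congr 1
        push_cast
        ring
      rw [List.map_congr_left hterm]
      push_cast
      have hsplit : (List.range (q + 1)).map
          (fun j : ℕ => c * a ^ (-(2 * ((q : ℤ) + 1 - (j : ℕ)))))
          = (List.range q).map (fun j : ℕ => c * a ^ (-(2 * ((q : ℤ) + 1 - (j : ℕ)))))
            ++ [c * a ^ (-2 : ℤ)] := by
        rw [List.range_succ, List.map_append, List.map_singleton]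
        norm_num
      rw [hsplit, List.prod_append, List.prod_singleton]
      rw [show -((q : ℤ) + 1) = -(q : ℤ) + -1 by ring, zpow_add]
      group
  have hcoe : (List.range p >>= fun x => pure ((x : ℕ) : ℤ)) = (List.range p).map Nat.cast := by
    rw [bind_pure_comp]; rfl
  rw [hcoe, List.map_map]
  simpa only [Function.comp_def] using L p hp

end Stmt5
end

section
/- Let k, k', p, p' ∈ ℕ with p, p' ≥ 1, and let M_k^p and M_{k'}^{p'} be as above (M_k = I + E with E[1,2]=1, E[1,3]=k+1, E[3,4]=1). If there exists P ∈ GL(4, ℤ) with M_k^p · P = P · M_{k'}^{p'}, then k = k' and p = p'. -/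
/-!
Write `N = M_k^p - 1 = p E + (p choose 2) E²`; since `E³ = 0`, `N² = p² (k + 1) e₀₃` (indices
from 0). An intertwiner `P` of `M_k^p` and `M_{k'}^{p'}` intertwines `N, N'` and hence `N², N'²`,
which makes `P` upper triangular for the order `0 < 2 < 1 < 3`. Its inverse is then triangular
for the same order, so the diagonal entries of `P` are units of `ℤ`, i.e. `±1`. Two entries of
`N P = P N'` read `p P₃₃ = p' P₂₂` and `p (k + 1) P₂₂ = p' (k' + 1) P₀₀`, which force `p = p'`
and then `k = k'`.
-/

namespace Stmt9

/-- The nilpotent matrix E with E[1,2]=1, E[1,3]=k+1, E[3,4]=1 (1-based indices). -/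
def E (k : ℕ) : Matrix (Fin 4) (Fin 4) ℤ :=
  !![0, 1, (k : ℤ) + 1, 0;
     0, 0, 0,           0;
     0, 0, 0,           1;
     0, 0, 0,           0]

/-- M_k = I + E. -/
def M (k : ℕ) : Matrix (Fin 4) (Fin 4) ℤ := 1 + E k

section
variable {R : Type*} [Ring R] {x : R}

theorem one_add_pow_of_pow_three_eq_zero (hx : x ^ 3 = 0) (n : ℕ) :
    (1 + x) ^ n = 1 + n • x + n.choose 2 • x ^ 2 := by
  induction n with
  | zero => simp
  | succ n ih =>
    rw [pow_succ, ih, Nat.choose_succ_succ, Nat.choose_one_right]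
    simp only [mul_add, add_mul, mul_one, one_mul, smul_mul_assoc, ← pow_succ, ← pow_two, hx,
      smul_zero, add_smul, one_smul]
    abel

theorem sq_one_add_pow_sub_one (hx : x ^ 3 = 0) (n : ℕ) :
    ((1 + x) ^ n - 1) ^ 2 = (n ^ 2) • x ^ 2 := by
  have h12 : x * x ^ 2 = 0 := by rw [← pow_succ', hx]
  have h21 : x ^ 2 * x = 0 := by rw [← pow_succ, hx]
  have h22 : x ^ 2 * x ^ 2 = 0 := by rw [← pow_add, pow_succ, hx, zero_mul]
  rw [one_add_pow_of_pow_three_eq_zero hx, add_assoc, add_sub_cancel_left, sq, add_mul, mul_add,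
    mul_add]
  simp only [smul_mul_smul_comm, h12, h21, h22, smul_zero, add_zero]
  rw [sq, sq]

end

theorem _root_.Matrix.BlockTriangular.isUnit_apply_self {m α R : Type*} [Fintype m]
    [DecidableEq m] [CommRing R] [LinearOrder α] {P : Matrix m m R} {b : m → α}
    (hb : Function.Injective b)
    (hP : P.BlockTriangular b) (hu : IsUnit P) (i : m) : IsUnit (P i i) := by
  let := hu.invertible
  have hinv := Matrix.blockTriangular_inv_of_blockTriangular hP
  refine IsUnit.of_mul_eq_one_right (P⁻¹ i i) ?_
  rw [← Matrix.one_apply_eq i, ← Matrix.inv_mul_of_invertible P, Matrix.mul_apply,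
    Finset.sum_eq_single i]
  · intro l _ hl
    rcases lt_or_gt_of_ne (hb.ne hl) with hlt | hlt
    · rw [hinv hlt, zero_mul]
    · rw [hP hlt, mul_zero]
  · simp

theorem _root_.Matrix.row_col_eq_zero_of_single_mul_eq_mul_single {n R : Type*} [Fintype n]
    [DecidableEq n] [Semiring R] [NoZeroDivisors R] {P : Matrix n n R} {a b : n} {x y : R}
    (hx : x ≠ 0) (hy : y ≠ 0)
    (h : Matrix.single a b x * P = P * Matrix.single a b y) :
    (∀ j ≠ b, P b j = 0) ∧ (∀ i ≠ a, P i a = 0) := by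
  refine ⟨fun j hj => ?_, fun i hi => ?_⟩
  · have := congrFun (congrFun h a) j
    rw [Matrix.single_mul_apply_same, Matrix.mul_single_apply_of_ne _ _ _ _ _ hj] at this
    exact (mul_eq_zero.mp this).resolve_left hx
  · have := congrFun (congrFun h i) b
    rw [Matrix.single_mul_apply_of_ne _ _ _ _ _ hi, Matrix.mul_single_apply_same] at this
    exact (mul_eq_zero.mp this.symm).resolve_right hy

theorem E_sq (k : ℕ) : E k ^ 2 = Matrix.single 0 3 ((k : ℤ) + 1) := by
  ext i j
  fin_cases i <;> fin_cases j <;> simp [E, sq, Matrix.mul_apply, Fin.sum_univ_four]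

theorem E_pow_three (k : ℕ) : E k ^ 3 = 0 := by
  rw [pow_succ, E_sq]
  ext i j
  fin_cases i <;> fin_cases j <;> simp [E, Matrix.mul_apply, Fin.sum_univ_four]

theorem M_pow_sub_one (k p : ℕ) : M k ^ p - 1 =
    !![0, (p : ℤ), p * (k + 1), p.choose 2 * (k + 1);
       0, 0, 0, 0;
       0, 0, 0, p;
       0, 0, 0, 0] := by
  rw [M, one_add_pow_of_pow_three_eq_zero (E_pow_three k), add_assoc, add_sub_cancel_left, E_sq]
  ext i j
  fin_cases i <;> fin_cases j <;> simp [E]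

theorem M_pow_sub_one_sq (k p : ℕ) :
    (M k ^ p - 1) ^ 2 = Matrix.single 0 3 ((p : ℤ) ^ 2 * (k + 1)) := by
  rw [M, sq_one_add_pow_sub_one (E_pow_three k), E_sq, Matrix.smul_single, nsmul_eq_mul]
  push_cast
  rfl

section Intertwiner

variable {k k' p p' : ℕ} {P : Matrix (Fin 4) (Fin 4) ℤ}

/-- The rank-one relation `(M k ^ p - 1) ^ 2 = p² (k + 1) e₀₃` clears row 3 and column 0 of `P`
off the diagonal; entry `(1, 3)` of the intertwining relation then gives `P 1 2 = 0`. -/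
theorem blockTriangular_of_semiconjBy (hp : 1 ≤ p) (hp' : 1 ≤ p')
    (h : SemiconjBy P (M k' ^ p' - 1) (M k ^ p - 1)) :
    P.BlockTriangular ![0, 2, 1, 3] := by
  have hsq := h.pow_right 2
  rw [SemiconjBy, M_pow_sub_one_sq, M_pow_sub_one_sq] at hsq
  obtain ⟨hrow, hcol⟩ :=
    Matrix.row_col_eq_zero_of_single_mul_eq_mul_single (by positivity) (by positivity) hsq.symm
  have h12 : P 1 2 = 0 := by
    have h13 := congrFun (congrFun h 1) 3
    rw [M_pow_sub_one, M_pow_sub_one] at h13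
    simp only [Matrix.mul_apply, Matrix.of_apply, Matrix.cons_val', Matrix.cons_val,
      Matrix.cons_val_fin_one, Fin.sum_univ_four, hcol 1 (by decide), Matrix.cons_val_zero,
      Matrix.cons_val_one, zero_mul, mul_zero, add_zero, zero_add, mul_eq_zero,
      Int.natCast_eq_zero] at h13
    omega
  intro i j hij
  fin_cases i <;> fin_cases j <;> simp at hij ⊢ <;>
    first | exact h12 | exact hrow _ (by decide) | exact hcol _ (by decide)

theorem diagonal_relations_of_semiconjBy (hb : P.BlockTriangular ![0, 2, 1, 3])
    (h : SemiconjBy P (M k' ^ p' - 1) (M k ^ p - 1)) :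
    p * P 3 3 = p' * P 2 2 ∧ p * (k + 1) * P 2 2 = p' * (k' + 1) * P 0 0 := by
  have h23 := congrFun (congrFun h 2) 3
  have h02 := congrFun (congrFun h 0) 2
  rw [M_pow_sub_one, M_pow_sub_one] at h23 h02
  have z20 : P 2 0 = 0 := hb (by decide)
  have z12 : P 1 2 = 0 := hb (by decide)
  have z32 : P 3 2 = 0 := hb (by decide)
  simp only [Matrix.mul_apply, Matrix.of_apply, Matrix.cons_val', Matrix.cons_val,
    Matrix.cons_val_fin_one, Fin.sum_univ_four, Matrix.cons_val_zero, Matrix.cons_val_one, z20, z12,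
    z32, zero_mul, mul_zero, add_zero, zero_add] at h23 h02
  constructor <;> linarith

end Intertwiner

theorem eq_of_diagonal_relations {k k' p p' : ℕ} {u v w : ℤ} (hu : IsUnit u) (hv : IsUnit v)
    (hw : IsUnit w) (hp : 1 ≤ p) (h₁ : p * v = p' * w) (h₂ : p * (k + 1) * w = p' * (k' + 1) * u) :
    k = k' ∧ p = p' := by
  rcases Int.isUnit_iff.mp hv with rfl | rfl <;> rcases Int.isUnit_iff.mp hw with rfl | rfl <;>
    rcases Int.isUnit_iff.mp hu with rfl | rfl <;> constructor <;> nlinarith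

/-- If some P ∈ GL(4,ℤ) intertwines M_k^p and M_{k'}^{p'}, then k = k' and p = p'. -/
theorem stmt_9 (k k' p p' : ℕ) (hp : 1 ≤ p) (hp' : 1 ≤ p')
    (P : Matrix (Fin 4) (Fin 4) ℤ) (hP : IsUnit P)
    (h : M k ^ p * P = P * M k' ^ p') :
    k = k' ∧ p = p' := by
  have hs : SemiconjBy P (M k' ^ p' - 1) (M k ^ p - 1) :=
    SemiconjBy.sub_right h.symm (.one_right P)
  have hb : P.BlockTriangular ![0, 2, 1, 3] := blockTriangular_of_semiconjBy hp hp' hs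
  have hinj : Function.Injective (![0, 2, 1, 3] : Fin 4 → ℕ) := by decide
  obtain ⟨h₁, h₂⟩ := diagonal_relations_of_semiconjBy hb hs
  exact eq_of_diagonal_relations (hb.isUnit_apply_self hinj hP 0) (hb.isUnit_apply_self hinj hP 3)
    (hb.isUnit_apply_self hinj hP 2) hp h₁ h₂

end Stmt9
end
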